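/- Let δ be a real number and define z(θ) = 1 + δ·ξ(θ). Then for every θ in (−π/2, π/2), z satisfies the differential equation (cos²θ/2)·z''(θ) − cosθ·sinθ·z'(θ) − z(θ) + 1 = 2δ·cos²θ. -/

import Mathlib

open Real Set Filter Topology

/-!
With `u θ = cos²θ + 2θ sinθ cosθ + θ² − π²/4` one has `u' = 4θ cos²θ`, so `ξ = u / cos²` solves the
first-order linear equation `ξ' = 4θ + 2 tanθ · ξ`. Differentiating once more and using
`tan' = 1 / cos²` turns this into `(cos²θ / 2) ξ'' − cosθ sinθ ξ' − ξ = 2 cos²θ`; the equation for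
`z = 1 + δ ξ` is `δ` times it.
-/

/-- The test function ξ(θ) = (cos²θ + 2θ·sinθ·cosθ + θ² − π²/4)/cos²θ. -/
noncomputable def xi (θ : ℝ) : ℝ :=
  (Real.cos θ ^ 2 + 2 * θ * Real.sin θ * Real.cos θ + θ ^ 2 - Real.pi ^ 2 / 4) /
    Real.cos θ ^ 2

noncomputable def xiNumerator (θ : ℝ) : ℝ :=
  Real.cos θ ^ 2 + 2 * θ * Real.sin θ * Real.cos θ + θ ^ 2 - Real.pi ^ 2 / 4

lemma hasDerivAt_xiNumerator (θ : ℝ) :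
    HasDerivAt xiNumerator (4 * θ * Real.cos θ ^ 2) θ := by
  refine ((((hasDerivAt_cos θ).pow 2).add
    ((((hasDerivAt_id θ).const_mul 2).mul (hasDerivAt_sin θ)).mul (hasDerivAt_cos θ))).add
    (hasDerivAt_pow 2 θ)).sub_const (π ^ 2 / 4) |>.congr_deriv ?_
  simp only [Pi.mul_apply, id]
  linear_combination (-2 * θ) * Real.sin_sq_add_cos_sq θ

lemma hasDerivAt_xi {θ : ℝ} (hc : Real.cos θ ≠ 0) :
    HasDerivAt xi (4 * θ + 2 * tan θ * xi θ) θ := by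
  refine ((hasDerivAt_xiNumerator θ).div ((hasDerivAt_cos θ).pow 2)
    (pow_ne_zero 2 hc)).congr_deriv ?_
  rw [xi, xiNumerator, tan_eq_sin_div_cos, Pi.pow_apply]
  field_simp
  ring

lemma second_order_ode_of_first_order_ode {f : ℝ → ℝ} {θ : ℝ} (hc : Real.cos θ ≠ 0)
    (hf : ∀ᶠ t in 𝓝 θ, HasDerivAt f (4 * t + 2 * tan t * f t) t) :
    Real.cos θ ^ 2 / 2 * deriv (deriv f) θ - Real.cos θ * Real.sin θ * deriv f θ - f θ =
      2 * Real.cos θ ^ 2 := by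
  have hf' : deriv f =ᶠ[𝓝 θ] fun t => 4 * t + 2 * tan t * f t :=
    hf.mono fun t ht => ht.deriv
  have hf'' : deriv (deriv f) θ =
      4 * 1 + (2 * (1 / Real.cos θ ^ 2) * f θ + 2 * tan θ * (4 * θ + 2 * tan θ * f θ)) := by
    rw [hf'.deriv_eq]
    exact (((hasDerivAt_id θ).const_mul 4).add
      (((hasDerivAt_tan hc).const_mul 2).mul hf.self_of_nhds)).deriv
  rw [hf'', hf.self_of_nhds.deriv, tan_eq_sin_div_cos]
  field_simp
  ring

lemma xi_ode {θ : ℝ} (hc : Real.cos θ ≠ 0) :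
    Real.cos θ ^ 2 / 2 * deriv (deriv xi) θ - Real.cos θ * Real.sin θ * deriv xi θ - xi θ =
      2 * Real.cos θ ^ 2 := by
  refine second_order_ode_of_first_order_ode hc ?_
  filter_upwards [continuous_cos.continuousAt.eventually_ne hc] with t ht
  exact hasDerivAt_xi ht

theorem z_ode (δ : ℝ) :
    ∀ θ ∈ Set.Ioo (-(Real.pi / 2)) (Real.pi / 2),
      Real.cos θ ^ 2 / 2 * deriv (deriv (fun t => 1 + δ * xi t)) θ
        - Real.cos θ * Real.sin θ * deriv (fun t => 1 + δ * xi t) θ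
        - (1 + δ * xi θ) + 1 = 2 * δ * Real.cos θ ^ 2 := by
  intro θ hθ
  simp only [deriv_const_add', deriv_const_mul_field']
  linear_combination δ * xi_ode (cos_pos_of_mem_Ioo hθ).ne'
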